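/- Let 0 < a < b and set c := min(b−a, a/2). There exists a constant C₂ = C₂(d,a,b) > 0 such that for every nonnegative Borel measure μ on ℝ^d, every t > 0 and all x, y ∈ ℝ^d, ∫₀^t ∫_{ℝ^d} Γ_a(t−s; x−z)·Γ_b(s; z−y) μ(dz) ds ≤ C₂·Γ_a(t; x−y)·sup_{x'∈ℝ^d} ∫₀^t ∫_{ℝ^d} Γ_c(s; x'−y') μ(dy') ds, where both sides are allowed to be +∞. -/

import Mathlib

open MeasureTheory Set ENNReal

noncomputable def Gam (d : ℕ) (lam t : ℝ) (x : EuclideanSpace ℝ (Fin d)) : ℝ :=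
  t ^ (-(d : ℝ) / 2) * Real.exp (-lam * ‖x‖ ^ 2 / t)

lemma gam_nonneg (d : ℕ) (lam t : ℝ) (ht : 0 ≤ t) (x : EuclideanSpace ℝ (Fin d)) :
    0 ≤ Gam d lam t x :=
  mul_nonneg (Real.rpow_nonneg ht _) (Real.exp_nonneg _)

lemma gam_zero (d : ℕ) (hd : d ≠ 0) (lam : ℝ) (x : EuclideanSpace ℝ (Fin d)) :
    Gam d lam 0 x = 0 := by
  have hd' : (0:ℝ) < (d:ℝ) := Nat.cast_pos.2 (Nat.pos_of_ne_zero hd)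
  have h : -(d : ℝ)/2 ≠ 0 := by intro heq; nlinarith
  unfold Gam
  rw [Real.zero_rpow h, zero_mul]

lemma conv_norm {d : ℕ} (u v : EuclideanSpace ℝ (Fin d)) {p q : ℝ} (hp : 0 < p) (hq : 0 < q) :
    ‖u + v‖ ^ 2 / (p + q) ≤ ‖u‖ ^ 2 / p + ‖v‖ ^ 2 / q := by
  have h : ‖u + v‖ ≤ ‖u‖ + ‖v‖ := norm_add_le u v
  have h2 : ‖u + v‖ ^ 2 ≤ (‖u‖ + ‖v‖) ^ 2 := pow_le_pow_left₀ (norm_nonneg _) h 2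
  rw [div_add_div _ _ hp.ne' hq.ne', div_le_div_iff₀ (by positivity) (by positivity)]
  nlinarith [sq_nonneg (q * ‖u‖ - p * ‖v‖), mul_pos hp hq, norm_nonneg u, norm_nonneg v]

lemma rpow_bound (d : ℕ) {t w : ℝ} (ht : 0 < t) (hw : t / 4 ≤ w) :
    w ^ (-(d : ℝ) / 2) ≤ 4 ^ ((d : ℝ) / 2) * t ^ (-(d : ℝ) / 2) := by
  have h1 : w ^ (-(d : ℝ) / 2) ≤ (t / 4) ^ (-(d : ℝ) / 2) :=
    Real.rpow_le_rpow_of_nonpos (by positivity) hw (by rw [neg_div]; exact neg_nonpos.2 (by positivity))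
  refine h1.trans_eq ?_
  rw [Real.div_rpow ht.le (by norm_num : (0:ℝ) ≤ 4),
    show -(d : ℝ)/2 = -((d : ℝ)/2) by ring,
    Real.rpow_neg (by norm_num : (0:ℝ) ≤ 4), div_eq_mul_inv, inv_inv, mul_comm]

lemma key_num (a b t u : ℝ) (ha : 0 < a) (hab : a < b) (ht : 0 < t)
    (hu : 0 < u) (hu4 : u ≤ t / 4) :
    a * u / (a - min (b - a) (a / 2)) + a * (t - u) / b ≤ t := by
  set c := min (b - a) (a / 2) with hc
  have hc2 : c ≤ a / 2 := min_le_right _ _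
  have hac : 0 < a - c := by linarith
  have hb : 0 < b := by linarith
  rw [div_add_div _ _ hac.ne' hb.ne', div_le_iff₀ (by positivity)]
  rcases le_total (b - a) (a / 2) with h | h
  · rw [hc, min_eq_left h]
    nlinarith [mul_nonneg (mul_nonneg ht.le (by linarith : (0:ℝ) ≤ 3*a - 2*b)) (by linarith : (0:ℝ) ≤ b - a),
      mul_nonneg (by linarith : (0:ℝ) ≤ t/4 - u) (by nlinarith : (0:ℝ) ≤ 2*a*b - 2*a^2)]
  · rw [hc, min_eq_right h]
    nlinarith [mul_nonneg ht.le (by linarith : (0:ℝ) ≤ 2*b - 3*a),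
      mul_nonneg (by linarith : (0:ℝ) ≤ t/4 - u) (by linarith : (0:ℝ) ≤ b - a/2)]

lemma gam1 {d : ℕ} {a b t s : ℝ} (ha : 0 < a) (hab : a < b) (ht : 0 < t)
    (hs : 0 < s) (hs3 : s ≤ 3 * t / 4) (x y z : EuclideanSpace ℝ (Fin d)) :
    Gam d a (t - s) (x - z) * Gam d b s (z - y) ≤
      4 ^ ((d : ℝ) / 2) * Gam d a t (x - y) * Gam d (min (b - a) (a / 2)) s (y - z) := by
  set c := min (b - a) (a / 2) with hcdef
  have hts : 0 < t - s := by linarith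
  have hpow : (t - s) ^ (-(d : ℝ)/2) ≤ 4 ^ ((d : ℝ)/2) * t ^ (-(d : ℝ)/2) :=
    rpow_bound d ht (by linarith)
  have hexp : Real.exp (-a * ‖x - z‖ ^ 2 / (t - s)) * Real.exp (-b * ‖z - y‖ ^ 2 / s)
      ≤ Real.exp (-a * ‖x - y‖ ^ 2 / t) * Real.exp (-c * ‖y - z‖ ^ 2 / s) := by
    rw [← Real.exp_add, ← Real.exp_add, Real.exp_le_exp, norm_sub_rev y z]
    have hconv : ‖x - y‖ ^ 2 / t ≤ ‖x - z‖ ^ 2 / (t - s) + ‖z - y‖ ^ 2 / s := by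
      have h := conv_norm (x - z) (z - y) hts hs
      rw [sub_add_sub_cancel, show t - s + s = t by ring] at h
      exact h
    have hZ : (0:ℝ) ≤ ‖z - y‖ ^ 2 / s := by positivity
    have hc1 : c ≤ b - a := min_le_left _ _
    have hc0 : 0 < c := lt_min (by linarith) (by linarith)
    have h1 : a * (‖x - y‖ ^ 2 / t) ≤ a * (‖x - z‖ ^ 2 / (t - s) + ‖z - y‖ ^ 2 / s) :=
      mul_le_mul_of_nonneg_left hconv ha.le
    have h2 : (a + c) * (‖z - y‖ ^ 2 / s) ≤ b * (‖z - y‖ ^ 2 / s) :=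
      mul_le_mul_of_nonneg_right (by linarith) hZ
    rw [neg_mul, neg_mul, neg_mul, neg_mul, neg_div, neg_div, neg_div, neg_div,
      mul_div_assoc, mul_div_assoc, mul_div_assoc, mul_div_assoc]
    nlinarith [h1, h2]
  have hK : (0:ℝ) < 4 ^ ((d : ℝ)/2) := Real.rpow_pos_of_pos (by norm_num) _
  unfold Gam
  calc (t - s) ^ (-(d : ℝ)/2) * Real.exp (-a * ‖x - z‖ ^ 2 / (t - s)) *
        (s ^ (-(d : ℝ)/2) * Real.exp (-b * ‖z - y‖ ^ 2 / s))
      = ((t - s) ^ (-(d : ℝ)/2) * s ^ (-(d : ℝ)/2)) *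
        (Real.exp (-a * ‖x - z‖ ^ 2 / (t - s)) * Real.exp (-b * ‖z - y‖ ^ 2 / s)) := by ring
    _ ≤ (4 ^ ((d : ℝ)/2) * t ^ (-(d : ℝ)/2) * s ^ (-(d : ℝ)/2)) *
        (Real.exp (-a * ‖x - y‖ ^ 2 / t) * Real.exp (-c * ‖y - z‖ ^ 2 / s)) := by
        apply mul_le_mul _ hexp (by positivity) (by positivity)
        exact mul_le_mul_of_nonneg_right hpow (Real.rpow_nonneg hs.le _)
    _ = 4 ^ ((d : ℝ)/2) * (t ^ (-(d : ℝ)/2) * Real.exp (-a * ‖x - y‖ ^ 2 / t)) *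
        (s ^ (-(d : ℝ)/2) * Real.exp (-c * ‖y - z‖ ^ 2 / s)) := by ring

lemma gam2 {d : ℕ} {a b t u : ℝ} (ha : 0 < a) (hab : a < b) (ht : 0 < t)
    (hu : 0 < u) (hu4 : u ≤ t / 4) (x y z : EuclideanSpace ℝ (Fin d)) :
    Gam d a u (x - z) * Gam d b (t - u) (z - y) ≤
      4 ^ ((d : ℝ) / 2) * Gam d a t (x - y) * Gam d (min (b - a) (a / 2)) u (x - z) := by
  set c := min (b - a) (a / 2) with hcdef
  have hb : 0 < b := by linarith
  have htu : 0 < t - u := by linarith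
  have hc1 : c ≤ b - a := min_le_left _ _
  have hc2 : c ≤ a / 2 := min_le_right _ _
  have hc0 : 0 < c := lt_min (by linarith) (by linarith)
  have hac : 0 < a - c := by linarith
  have hpow : (t - u) ^ (-(d : ℝ)/2) ≤ 4 ^ ((d : ℝ)/2) * t ^ (-(d : ℝ)/2) :=
    rpow_bound d ht (by linarith)
  have hexp : Real.exp (-a * ‖x - z‖ ^ 2 / u) * Real.exp (-b * ‖z - y‖ ^ 2 / (t - u))
      ≤ Real.exp (-a * ‖x - y‖ ^ 2 / t) * Real.exp (-c * ‖x - z‖ ^ 2 / u) := by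
    rw [← Real.exp_add, ← Real.exp_add, Real.exp_le_exp]
    set X := ‖x - z‖ ^ 2 with hX
    set Z := ‖z - y‖ ^ 2 with hZdef
    set Y := ‖x - y‖ ^ 2 with hY
    have hXn : 0 ≤ X := sq_nonneg _
    have hZn : 0 ≤ Z := sq_nonneg _
    have hYn : 0 ≤ Y := sq_nonneg _
    set p := a * u / (a - c) with hp
    set q := a * (t - u) / b with hq
    have hp0 : 0 < p := by positivity
    have hq0 : 0 < q := by positivity
    have hpq : p + q ≤ t := key_num a b t u ha hab ht hu hu4
    have hconv : Y / (p + q) ≤ X / p + Z / q := by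
      have h := conv_norm (x - z) (z - y) hp0 hq0
      rw [sub_add_sub_cancel] at h
      exact h
    have hYt : Y / t ≤ Y / (p + q) := by
      apply div_le_div_of_nonneg_left hYn (by positivity) hpq
    have e1 : a * (X / p) = (a - c) * (X / u) := by
      rw [hp]; field_simp
    have e2 : a * (Z / q) = b * (Z / (t - u)) := by
      rw [hq]; field_simp
    have h1 : a * (Y / t) ≤ a * (X / p) + a * (Z / q) := by
      have := mul_le_mul_of_nonneg_left (hYt.trans hconv) ha.le
      linarith [mul_le_mul_of_nonneg_left (hYt.trans hconv) ha.le, (mul_add a (X/p) (Z/q))]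
    have h2 : a * (Y / t) ≤ (a - c) * (X / u) + b * (Z / (t - u)) := by
      rw [← e1, ← e2]; exact h1
    have e3 : (a - c) * (X / u) + c * (X / u) = a * (X / u) := by ring
    rw [neg_mul, neg_mul, neg_mul, neg_mul, neg_div, neg_div, neg_div, neg_div,
      mul_div_assoc, mul_div_assoc, mul_div_assoc, mul_div_assoc]
    linarith [h2, e3]
  unfold Gam
  calc u ^ (-(d : ℝ)/2) * Real.exp (-a * ‖x - z‖ ^ 2 / u) *
        ((t - u) ^ (-(d : ℝ)/2) * Real.exp (-b * ‖z - y‖ ^ 2 / (t - u)))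
      = ((t - u) ^ (-(d : ℝ)/2) * u ^ (-(d : ℝ)/2)) *
        (Real.exp (-a * ‖x - z‖ ^ 2 / u) * Real.exp (-b * ‖z - y‖ ^ 2 / (t - u))) := by ring
    _ ≤ (4 ^ ((d : ℝ)/2) * t ^ (-(d : ℝ)/2) * u ^ (-(d : ℝ)/2)) *
        (Real.exp (-a * ‖x - y‖ ^ 2 / t) * Real.exp (-c * ‖x - z‖ ^ 2 / u)) := by
        apply mul_le_mul _ hexp (by positivity) (by positivity)
        exact mul_le_mul_of_nonneg_right hpow (Real.rpow_nonneg hu.le _)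
    _ = 4 ^ ((d : ℝ)/2) * (t ^ (-(d : ℝ)/2) * Real.exp (-a * ‖x - y‖ ^ 2 / t)) *
        (u ^ (-(d : ℝ)/2) * Real.exp (-c * ‖x - z‖ ^ 2 / u)) := by ring

/-- 3P-type inequality for two Gaussian kernels against a measure. -/
theorem stmt2 (d : ℕ) (hd : 2 ≤ d) (a b : ℝ) (ha : 0 < a) (hab : a < b) :
    ∃ C₂ : ℝ, 0 < C₂ ∧
      ∀ (μ : Measure (EuclideanSpace ℝ (Fin d))) (t : ℝ), 0 < t →
        ∀ x y : EuclideanSpace ℝ (Fin d),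
          (∫⁻ s in Set.Ioc (0 : ℝ) t, ∫⁻ z,
              ENNReal.ofReal (Gam d a (t - s) (x - z) * Gam d b s (z - y)) ∂μ)
            ≤ ENNReal.ofReal (C₂ * Gam d a t (x - y)) *
                ⨆ x' : EuclideanSpace ℝ (Fin d), ∫⁻ s in Set.Ioc (0 : ℝ) t, ∫⁻ y',
                  ENNReal.ofReal (Gam d (min (b - a) (a / 2)) s (x' - y')) ∂μ := by
  have hK : (0:ℝ) < 4 ^ ((d : ℝ)/2) := Real.rpow_pos_of_pos (by norm_num) _
  refine ⟨2 * 4 ^ ((d : ℝ)/2), by positivity, fun μ t ht x y => ?_⟩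
  set c := min (b - a) (a / 2) with hcdef
  set K := (4:ℝ) ^ ((d : ℝ)/2) with hKdef
  set G := Gam d a t (x - y) with hG
  have hGn : 0 ≤ G := gam_nonneg d a t ht.le _
  have hKGn : 0 ≤ K * G := mul_nonneg hK.le hGn
  set S := ⨆ x' : EuclideanSpace ℝ (Fin d), ∫⁻ s in Set.Ioc (0:ℝ) t, ∫⁻ y',
      ENNReal.ofReal (Gam d c s (x' - y')) ∂μ with hS
  set F : ℝ → ℝ≥0∞ :=
    fun s => ∫⁻ z, ENNReal.ofReal (Gam d a (t - s) (x - z) * Gam d b s (z - y)) ∂μ with hF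
  -- Part 1 : s ∈ (0, 3t/4]
  have h1 : ∫⁻ s in Ioc (0:ℝ) (3*t/4), F s ≤ ENNReal.ofReal (K * G) * S := by
    have step : ∀ s ∈ Ioc (0:ℝ) (3*t/4),
        F s ≤ ENNReal.ofReal (K * G) * ∫⁻ z, ENNReal.ofReal (Gam d c s (y - z)) ∂μ := by
      intro s hs
      calc F s ≤ ∫⁻ z, ENNReal.ofReal (K * G * Gam d c s (y - z)) ∂μ :=
            lintegral_mono fun z => ENNReal.ofReal_le_ofReal (gam1 ha hab ht hs.1 hs.2 x y z)
        _ = ∫⁻ z, ENNReal.ofReal (K * G) * ENNReal.ofReal (Gam d c s (y - z)) ∂μ :=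
            lintegral_congr fun z => ENNReal.ofReal_mul hKGn
        _ = _ := lintegral_const_mul' _ _ ENNReal.ofReal_ne_top
    calc ∫⁻ s in Ioc (0:ℝ) (3*t/4), F s
        ≤ ∫⁻ s in Ioc (0:ℝ) (3*t/4), ENNReal.ofReal (K * G) *
            ∫⁻ z, ENNReal.ofReal (Gam d c s (y - z)) ∂μ :=
          setLIntegral_mono' measurableSet_Ioc step
      _ = ENNReal.ofReal (K * G) *
            ∫⁻ s in Ioc (0:ℝ) (3*t/4), ∫⁻ z, ENNReal.ofReal (Gam d c s (y - z)) ∂μ :=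
          lintegral_const_mul' _ _ ENNReal.ofReal_ne_top
      _ ≤ ENNReal.ofReal (K * G) *
            ∫⁻ s in Ioc (0:ℝ) t, ∫⁻ z, ENNReal.ofReal (Gam d c s (y - z)) ∂μ :=
          mul_le_mul_right (lintegral_mono_set (Ioc_subset_Ioc le_rfl (by linarith))) _
      _ ≤ ENNReal.ofReal (K * G) * S :=
          mul_le_mul_right (le_iSup (fun x' => ∫⁻ s in Set.Ioc (0:ℝ) t, ∫⁻ y',
            ENNReal.ofReal (Gam d c s (x' - y')) ∂μ) y) _
  -- Part 2 : s ∈ (3t/4, t], substitute u = t - s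
  have hemb : MeasurableEmbedding (fun u : ℝ => t - u) :=
    (MeasurableEquiv.subLeft t).measurableEmbedding
  have hmp : MeasurePreserving (fun u : ℝ => t - u) volume volume :=
    Measure.measurePreserving_sub_left volume t
  have hpre : (fun u : ℝ => t - u) ⁻¹' Ioc (3*t/4) t = Ico 0 (t/4) := by
    ext u
    simp only [mem_preimage, mem_Ioc, mem_Ico]
    constructor
    · rintro ⟨h1', h2'⟩; constructor <;> linarith
    · rintro ⟨h1', h2'⟩; constructor <;> linarith
  have hsub : ∫⁻ s in Ioc (3*t/4) t, F s = ∫⁻ u in Ico (0:ℝ) (t/4), F (t - u) := by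
    rw [← hmp.setLIntegral_comp_preimage_emb hemb F (Ioc (3*t/4) t), hpre]
  have h2 : ∫⁻ u in Ico (0:ℝ) (t/4), F (t - u) ≤ ENNReal.ofReal (K * G) * S := by
    have step : ∀ u ∈ Ico (0:ℝ) (t/4),
        F (t - u) ≤ ENNReal.ofReal (K * G) * ∫⁻ z, ENNReal.ofReal (Gam d c u (x - z)) ∂μ := by
      intro u hu
      rcases eq_or_lt_of_le hu.1 with h0 | h0
      · have hz : F (t - u) = 0 := by
          have hzz : ∀ z : EuclideanSpace ℝ (Fin d),
              Gam d a (t - (t - u)) (x - z) * Gam d b (t - u) (z - y) = 0 := by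
            intro z
            rw [← h0, sub_zero, sub_self, gam_zero d (by omega) a, zero_mul]
          simp only [hF, hzz, ENNReal.ofReal_zero, lintegral_zero]
        rw [hz]; exact zero_le
      · have key : t - (t - u) = u := by ring
        calc F (t - u)
            = ∫⁻ z, ENNReal.ofReal (Gam d a u (x - z) * Gam d b (t - u) (z - y)) ∂μ := by
              simp only [hF, key]
          _ ≤ ∫⁻ z, ENNReal.ofReal (K * G * Gam d c u (x - z)) ∂μ :=
              lintegral_mono fun z => ENNReal.ofReal_le_ofReal (gam2 ha hab ht h0 hu.2.le x y z)
          _ = ∫⁻ z, ENNReal.ofReal (K * G) * ENNReal.ofReal (Gam d c u (x - z)) ∂μ :=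
              lintegral_congr fun z => ENNReal.ofReal_mul hKGn
          _ = _ := lintegral_const_mul' _ _ ENNReal.ofReal_ne_top
    calc ∫⁻ u in Ico (0:ℝ) (t/4), F (t - u)
        ≤ ∫⁻ u in Ico (0:ℝ) (t/4), ENNReal.ofReal (K * G) *
            ∫⁻ z, ENNReal.ofReal (Gam d c u (x - z)) ∂μ :=
          setLIntegral_mono' measurableSet_Ico step
      _ = ENNReal.ofReal (K * G) *
            ∫⁻ u in Ico (0:ℝ) (t/4), ∫⁻ z, ENNReal.ofReal (Gam d c u (x - z)) ∂μ :=
          lintegral_const_mul' _ _ ENNReal.ofReal_ne_top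
      _ = ENNReal.ofReal (K * G) *
            ∫⁻ u in Ioo (0:ℝ) (t/4), ∫⁻ z, ENNReal.ofReal (Gam d c u (x - z)) ∂μ := by
          rw [setLIntegral_congr (Ioo_ae_eq_Ico (a := (0:ℝ)) (b := t/4))]
      _ ≤ ENNReal.ofReal (K * G) *
            ∫⁻ u in Ioc (0:ℝ) t, ∫⁻ z, ENNReal.ofReal (Gam d c u (x - z)) ∂μ :=
          mul_le_mul_right (lintegral_mono_set
            (show Ioo (0:ℝ) (t/4) ⊆ Ioc (0:ℝ) t from
              fun u hu => ⟨hu.1, hu.2.le.trans (by linarith)⟩)) _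
      _ ≤ ENNReal.ofReal (K * G) * S :=
          mul_le_mul_right (le_iSup (fun x' => ∫⁻ s in Set.Ioc (0:ℝ) t, ∫⁻ y',
            ENNReal.ofReal (Gam d c s (x' - y')) ∂μ) x) _
  calc ∫⁻ s in Ioc (0:ℝ) t, F s
      = (∫⁻ s in Ioc (0:ℝ) (3*t/4), F s) + ∫⁻ s in Ioc (3*t/4) t, F s := by
        rw [← lintegral_union measurableSet_Ioc (Ioc_disjoint_Ioc_of_le le_rfl),
          Ioc_union_Ioc_eq_Ioc (by linarith) (by linarith)]
    _ ≤ ENNReal.ofReal (K * G) * S + ENNReal.ofReal (K * G) * S :=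
        add_le_add h1 (hsub.trans_le h2)
    _ = ENNReal.ofReal (2 * K * G) * S := by
        rw [← add_mul, ← ENNReal.ofReal_add hKGn hKGn]
        congr 2
        ring
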